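/- arXiv:math/0409042 — 3 statements merged into one kernel-verified Lean document; each statement's English description precedes it below -/
import Mathlib

section
/- If a random variable X taking values in the non-negative integers is infinitely divisible with integer-valued components (i.e., for every n ≥ 1 there exist i.i.d. non-negative integer-valued random variables X_{1n}, ..., X_{nn} whose sum has the same distribution as X), then P(X = 0) > 0. -/
open scoped ENNReal

/-- Convolution of two probability mass functions on ℕ:
the distribution of the sum of two independent random variables. -/
noncomputable def pmfConv (p q : PMF ℕ) : PMF ℕ :=
  p.bind fun a => q.map fun b => a + b

/-- `pmfConvPow p n` is the distribution of the sum of `n` i.i.d. random variables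
each distributed according to `p`. -/
noncomputable def pmfConvPow (p : PMF ℕ) : ℕ → PMF ℕ
  | 0 => PMF.pure 0
  | n + 1 => pmfConv p (pmfConvPow p n)

/-! If `X = ν^{*n}` with `X 0 = 0`, then `ν 0 = 0`, so every atom of `ν` is `≥ 1` and every atom of
`X` is `≥ n`. Since `n` is arbitrary, `X` can have no atom at all, which is absurd for a
probability distribution. -/

theorem mem_support_pmfConv {p q : PMF ℕ} {k : ℕ} :
    k ∈ (pmfConv p q).support ↔ ∃ a ∈ p.support, ∃ b ∈ q.support, a + b = k := by
  simp only [pmfConv, PMF.mem_support_bind_iff, PMF.mem_support_map_iff]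

theorem zero_mem_support_pmfConvPow {ν : PMF ℕ} (h : 0 ∈ ν.support) :
    ∀ n, 0 ∈ (pmfConvPow ν n).support
  | 0 => by simp [pmfConvPow]
  | n + 1 => mem_support_pmfConv.2 ⟨0, h, 0, zero_mem_support_pmfConvPow h n, rfl⟩

theorem mul_le_of_mem_support_pmfConvPow {ν : PMF ℕ} {m : ℕ} (h : ∀ a ∈ ν.support, m ≤ a) :
    ∀ {n k : ℕ}, k ∈ (pmfConvPow ν n).support → n * m ≤ k
  | 0, _, _ => by simp
  | n + 1, k, hk => by
    obtain ⟨a, ha, b, hb, rfl⟩ := mem_support_pmfConv.1 hk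
    have := mul_le_of_mem_support_pmfConvPow h hb
    have := h a ha
    rw [Nat.succ_mul]
    omega

/-- **Theorem 1.** If a random variable `X` on `{0,1,2,...}` is infinitely divisible with
integer-valued components (for every `n ≥ 1` there are i.i.d. non-negative integer-valued
`X_{1n}, ..., X_{nn}` whose sum is distributed as `X`), then `P(X = 0) > 0`. -/
theorem pos_mass_at_zero_of_infdiv_integer_components
    (X : PMF ℕ)
    (hID : ∀ n : ℕ, 1 ≤ n → ∃ ν : PMF ℕ, pmfConvPow ν n = X) :
    0 < X 0 := by
  by_contra hX0
  have hX0 : 0 ∉ X.support := by simpa [PMF.mem_support_iff, pos_iff_ne_zero] using hX0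
  obtain ⟨k, hk⟩ := X.support_nonempty
  obtain ⟨ν, rfl⟩ := hID (k + 1) (Nat.succ_pos k)
  have hν0 : 0 ∉ ν.support := fun h => hX0 (zero_mem_support_pmfConvPow h _)
  have hν : ∀ a ∈ ν.support, 1 ≤ a := fun a ha =>
    Nat.one_le_iff_ne_zero.2 fun ha0 => hν0 (ha0 ▸ ha)
  have := mul_le_of_mem_support_pmfConvPow hν hk
  omega
end

section
/- Let X be infinitely divisible on the non-negative integers with integer-valued components, and suppose P(X = 0) > 0 and P(X = 1) > 0. Then P(X = m) > 0 for every non-negative integer m; i.e., the support of X has no gaps. -/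
/-!
Write `X = ν^{*n}` with `n = m + 1`. A sum of `n` non-negative integers vanishes only if every
summand does, and equals `1` only if some summand does, so `ν 0 > 0` and `ν 1 > 0`. Then
`X m ≥ ν 1 ^ m * ν 0 ^ (n - m) > 0`: take `m` components equal to `1` and the rest equal to `0`.
-/

open scoped ENNReal

/-- The probability generating function `Q(s) = E[s^X]` of a pmf on ℕ. -/
noncomputable def pgf (X : PMF ℕ) (s : ℝ) : ℝ :=
  ∑' k : ℕ, (X k).toReal * s ^ k

section

variable {p q : PMF ℕ}

lemma pmfConv_pos_iff {k : ℕ} :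
    0 < pmfConv p q k ↔ ∃ a b, a + b = k ∧ 0 < p a ∧ 0 < q b := by
  simp only [pos_iff_ne_zero, ← PMF.mem_support_iff, pmfConv, PMF.support_bind,
    PMF.support_map]
  aesop

lemma pmfConvPow_succ_pos_add {a n k : ℕ} (ha : 0 < p a) (hk : 0 < pmfConvPow p n k) :
    0 < pmfConvPow p (n + 1) (a + k) :=
  pmfConv_pos_iff.2 ⟨a, k, rfl, ha, hk⟩

lemma pos_zero_of_pmfConvPow_succ_pos_zero {n : ℕ} (h : 0 < pmfConvPow p (n + 1) 0) :
    0 < p 0 := by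
  obtain ⟨a, b, hab, ha, -⟩ := pmfConv_pos_iff.1 h
  rwa [(Nat.add_eq_zero_iff.1 hab).1] at ha

lemma pos_one_of_pmfConvPow_pos_one {n : ℕ} (h : 0 < pmfConvPow p n 1) : 0 < p 1 := by
  induction n with
  | zero => simp [pmfConvPow] at h
  | succ n ih =>
    obtain ⟨a, b, hab, ha, hb⟩ := pmfConv_pos_iff.1 h
    rcases Nat.add_eq_one_iff.1 hab with ⟨-, rfl⟩ | ⟨rfl, -⟩
    · exact ih hb
    · exact ha

lemma pmfConvPow_pos_of_le (h0 : 0 < p 0) (h1 : 0 < p 1) {m n : ℕ} (hmn : m ≤ n) :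
    0 < pmfConvPow p n m := by
  induction n generalizing m with
  | zero => simp [Nat.le_zero.1 hmn, pmfConvPow]
  | succ n ih =>
    rcases m with _ | m
    · exact pmfConvPow_succ_pos_add h0 (ih n.zero_le)
    · simpa [add_comm] using pmfConvPow_succ_pos_add h1 (ih (Nat.succ_le_succ_iff.1 hmn))

end

/-- **Remark 1.** Let `X` be infinitely divisible on the non-negative integers with
integer-valued components, and suppose `P(X = 0) > 0` and `P(X = 1) > 0`. Then
`P(X = m) > 0` for every non-negative integer `m`: the support of `X` has no gaps. -/
theorem no_gaps_of_infdiv_integer_components_of_mass_at_zero_and_one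
    (X : PMF ℕ)
    (hID : ∀ n : ℕ, 1 ≤ n → ∃ ν : PMF ℕ, pmfConvPow ν n = X)
    (h0 : 0 < X 0) (h1 : 0 < X 1) :
    ∀ m : ℕ, 0 < X m := by
  intro m
  obtain ⟨ν, rfl⟩ := hID (m + 1) m.succ_pos
  exact pmfConvPow_pos_of_le (pos_zero_of_pmfConvPow_succ_pos_zero h0)
    (pos_one_of_pmfConvPow_pos_one h1) m.le_succ
end

section
/- For any integer k > 1, real t > 0 and 0 < p < 1 with q = 1 - p, the function s ↦ s·(p/(1 - q s^k))^t is the probability generating function of an infinitely divisible random variable X with P(X = 0) = 0, P(X = 1) > 0, and support {1, 1+k, 1+2k, ...}, which has gaps. Hence P(X = 1) > 0 alone does not prevent gaps in the support of a non-negative integer-valued infinitely divisible law. -/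
open scoped ENNReal

open MeasureTheory

noncomputable def mConv (μ ν : Measure ℝ) : Measure ℝ :=
  (μ.prod ν).map fun p => p.1 + p.2

noncomputable def mConvPow (μ : Measure ℝ) : ℕ → Measure ℝ
  | 0 => Measure.dirac 0
  | n + 1 => mConv μ (mConvPow μ n)

open Polynomial Finset Filter Topology


noncomputable def asc (a : ℝ) (j : ℕ) : ℝ := (ascPochhammer ℝ j).eval a
noncomputable def cf (a : ℝ) (j : ℕ) : ℝ := asc a j / j.factorial

lemma asc_zero (a : ℝ) : asc a 0 = 1 := by simp [asc]

lemma asc_succ (a : ℝ) (j : ℕ) : asc a (j + 1) = asc a j * (a + j) := by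
  simp [asc, ascPochhammer_succ_right, eval_mul]

lemma asc_pos {a : ℝ} (ha : 0 < a) (j : ℕ) : 0 < asc a j := by
  induction j with
  | zero => simp [asc_zero]
  | succ j ih => rw [asc_succ]; positivity

lemma cf_zero (a : ℝ) : cf a 0 = 1 := by simp [cf, asc_zero]

lemma cf_succ (a : ℝ) (j : ℕ) : cf a (j + 1) = cf a j * ((a + j) / (j + 1)) := by
  rw [cf, cf, asc_succ, Nat.factorial_succ]
  have h1 : ((j+1).factorial : ℝ) ≠ 0 := by positivity
  have h2 : (j.factorial : ℝ) ≠ 0 := by positivity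
  have h3 : (j:ℝ) + 1 ≠ 0 := by positivity
  rw [Nat.factorial_succ] at h1
  push_cast at h1 ⊢
  field_simp

lemma cf_pos {a : ℝ} (ha : 0 < a) (j : ℕ) : 0 < cf a j := by
  have := asc_pos ha j
  have : (0:ℝ) < j.factorial := by positivity
  unfold cf; positivity

lemma cf_succ_mul (a : ℝ) (j : ℕ) : cf a (j + 1) * (j + 1) = cf a j * (a + j) := by
  rw [cf_succ]
  have : (j:ℝ) + 1 ≠ 0 := by positivity
  field_simp

lemma asc_eq_neg_desc (a : ℝ) (j : ℕ) :
    asc a j = (-1) ^ j * (descPochhammer ℝ j).eval (-a) := by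
  rw [asc, ← ascPochhammer_eval_neg_eq_descPochhammer, neg_neg]

lemma desc_smeval_eq_eval (r : ℝ) (j : ℕ) :
    (descPochhammer ℤ j).smeval r = (descPochhammer ℝ j).eval r := by
  rw [descPochhammer_smeval_eq_ascPochhammer, ascPochhammer_smeval_eq_eval,
    descPochhammer_eval_eq_ascPochhammer]

lemma asc_add (a b : ℝ) (m : ℕ) :
    asc (a + b) m
      = ∑ ij ∈ antidiagonal m, (m.choose ij.1 : ℝ) * (asc a ij.1 * asc b ij.2) := by
  have h := Ring.descPochhammer_smeval_add (R := ℝ) (r := -a) (s := -b) m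
    (Commute.all _ _)
  rw [asc_eq_neg_desc, show -(a+b) = -a + -b by ring, ← desc_smeval_eq_eval, h,
    Finset.mul_sum]
  refine Finset.sum_congr rfl fun ij hij => ?_
  have hm : ij.1 + ij.2 = m := Finset.HasAntidiagonal.mem_antidiagonal.mp hij
  rw [asc_eq_neg_desc, asc_eq_neg_desc, ← desc_smeval_eq_eval, ← desc_smeval_eq_eval, ← hm,
    pow_add]
  ring

lemma cf_add (a b : ℝ) (m : ℕ) :
    ∑ ij ∈ antidiagonal m, cf a ij.1 * cf b ij.2 = cf (a + b) m := by
  rw [cf, asc_add, Finset.sum_div]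
  refine Finset.sum_congr rfl fun ij hij => ?_
  have hm : ij.1 + ij.2 = m := Finset.HasAntidiagonal.mem_antidiagonal.mp hij
  have h1 : ij.1 ≤ m := by omega
  have hcf : m.choose ij.1 * ij.1.factorial * (m - ij.1).factorial = m.factorial :=
    Nat.choose_mul_factorial_mul_factorial h1
  have h2 : m - ij.1 = ij.2 := by omega
  rw [h2] at hcf
  have hf1 : (ij.1.factorial : ℝ) ≠ 0 := by positivity
  have hf2 : (ij.2.factorial : ℝ) ≠ 0 := by positivity
  have hfm : (m.factorial : ℝ) ≠ 0 := by positivity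
  rw [cf, cf]
  have hch : (0:ℝ) < m.choose ij.1 := by
    have := Nat.choose_pos h1; positivity
  rw [← hcf]
  push_cast
  field_simp


lemma summable_cf_aux {a r : ℝ} (ha : 0 < a) (hr0 : 0 ≤ r) (hr1 : r < 1) :
    Summable (fun j : ℕ => ((j : ℝ) + 1) * cf a j * r ^ j) := by
  rcases eq_or_lt_of_le hr0 with h0 | h0
  · apply summable_of_ne_finset_zero (s := {0})
    intro j hj
    have hj1 : j ≠ 0 := by simpa using hj
    rw [← h0, zero_pow hj1, mul_zero]
  · set f : ℕ → ℝ := fun j => ((j : ℝ) + 1) * cf a j * r ^ j with hf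
    have hfpos : ∀ j, 0 < f j := by
      intro j
      have := cf_pos ha j
      positivity
    refine summable_of_ratio_test_tendsto_lt_one hr1
      (Filter.Eventually.of_forall fun j => (hfpos j).ne') ?_
    have hratio : ∀ j : ℕ, ‖f (j + 1)‖ / ‖f j‖
        = (1 + 1 / ((j:ℝ) + 1)) * (1 + (a - 1) * (1 / ((j:ℝ) + 1))) * r := by
      intro j
      have h1 : ((j:ℝ) + 1) ≠ 0 := by positivity
      have hc := cf_succ_mul a j
      have hcj := (cf_pos ha j).ne'
      rw [Real.norm_of_nonneg (hfpos (j+1)).le, Real.norm_of_nonneg (hfpos j).le, hf]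
      simp only
      push_cast
      rw [pow_succ]
      have hcf1 : cf a (j+1) = cf a j * (a + j) / ((j:ℝ)+1) := by
        field_simp at hc ⊢
        linarith [hc]
      rw [hcf1]
      have hrj : r ^ j ≠ 0 := by positivity
      field_simp
      ring
    have htend : Tendsto (fun j : ℕ =>
        (1 + 1 / ((j:ℝ) + 1)) * (1 + (a - 1) * (1 / ((j:ℝ) + 1))) * r) atTop (𝓝 r) := by
      have h0 : Tendsto (fun j : ℕ => 1 / ((j:ℝ) + 1)) atTop (𝓝 0) :=
        tendsto_one_div_add_atTop_nhds_zero_nat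
      have h1 : Tendsto (fun j : ℕ => 1 + 1 / ((j:ℝ) + 1)) atTop (𝓝 1) := by
        simpa using tendsto_const_nhds.add h0
      have h2 : Tendsto (fun j : ℕ => 1 + (a - 1) * (1 / ((j:ℝ) + 1))) atTop (𝓝 1) := by
        simpa using tendsto_const_nhds.add (h0.const_mul (a - 1))
      simpa using (h1.mul h2).mul_const r
    exact (Filter.Tendsto.congr (fun j => (hratio j).symm)) htend

lemma summable_cf {a x : ℝ} (ha : 0 < a) (hx : |x| < 1) :
    Summable (fun j : ℕ => cf a j * x ^ j) := by
  refine Summable.of_norm_bounded (summable_cf_aux ha (abs_nonneg x) hx) fun j => ?_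
  have hcj := (cf_pos ha j).le
  rw [norm_mul, norm_pow, Real.norm_of_nonneg hcj, Real.norm_eq_abs]
  have hone : (1:ℝ) ≤ (j:ℝ) + 1 := by
    have : (0:ℝ) ≤ (j:ℝ) := Nat.cast_nonneg j
    linarith
  have hp : (0:ℝ) ≤ |x| ^ j := by positivity
  calc cf a j * |x| ^ j = 1 * (cf a j * |x| ^ j) := by ring
    _ ≤ ((j:ℝ) + 1) * (cf a j * |x| ^ j) :=
        mul_le_mul_of_nonneg_right hone (mul_nonneg hcj hp)
    _ = ((j:ℝ) + 1) * cf a j * |x| ^ j := by ring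

lemma summable_cf_deriv {a r : ℝ} (ha : 0 < a) (hr0 : 0 ≤ r) (hr1 : r < 1) :
    Summable (fun j : ℕ => (j : ℝ) * cf a j * r ^ (j - 1)) := by
  rw [← summable_nat_add_iff 1]
  have hbase := (summable_cf_aux ha hr0 hr1).mul_left (a + 1)
  refine Summable.of_nonneg_of_le (fun j => ?_) (fun j => ?_) hbase
  · have := (cf_pos ha (j+1)).le
    positivity
  · simp only [Nat.add_sub_cancel]
    push_cast
    have hc := cf_succ_mul a j
    have hcj := (cf_pos ha j).le
    have hr : (0:ℝ) ≤ r ^ j := by positivity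
    have h1 : ((j:ℝ) + 1) * cf a (j+1) = cf a j * (a + j) := by
      push_cast at hc; linarith [hc]
    calc ((j:ℝ) + 1) * cf a (j + 1) * r ^ j = cf a j * (a + (j:ℝ)) * r ^ j := by rw [h1]
      _ ≤ (a + 1) * (((j:ℝ) + 1) * cf a j * r ^ j) := by
          have hj0 : (0:ℝ) ≤ (j:ℝ) := Nat.cast_nonneg j
          nlinarith [mul_nonneg (mul_nonneg hcj hr) (mul_nonneg ha.le hj0),
            mul_nonneg hcj hr]

lemma binom_tsum {a x : ℝ} (ha : 0 < a) (hx0 : 0 ≤ x) (hx1 : x < 1) :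
    ∑' j : ℕ, cf a j * x ^ j = (1 - x) ^ (-a) := by
  set r : ℝ := (1 + x) / 2 with hrdef
  have hxr : x < r := by rw [hrdef]; linarith
  have hr1 : r < 1 := by rw [hrdef]; linarith
  have hr0 : 0 < r := by rw [hrdef]; linarith
  set T : Set ℝ := Set.Ioo (-r) r with hT
  have habs : ∀ y ∈ T, |y| < r := fun y hy => abs_lt.mpr ⟨hy.1, hy.2⟩
  set S : ℝ → ℝ := fun y => ∑' j : ℕ, cf a j * y ^ j with hS
  set D : ℝ → ℝ := fun y => ∑' j : ℕ, cf a j * ((j : ℝ) * y ^ (j - 1)) with hD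
  set u : ℕ → ℝ := fun j => (j : ℝ) * cf a j * r ^ (j - 1) with hu
  have husum : Summable u := summable_cf_deriv ha hr0.le hr1
  have h0T : (0 : ℝ) ∈ T := ⟨by linarith, hr0⟩
  have hg0 : Summable fun j : ℕ => cf a j * (0:ℝ) ^ j := by
    apply summable_of_ne_finset_zero (s := {0})
    intro j hj
    have hj1 : j ≠ 0 := by simpa using hj
    rw [zero_pow hj1, mul_zero]
  have hbound : ∀ (j : ℕ), ∀ y ∈ T, ‖cf a j * ((j:ℝ) * y ^ (j - 1))‖ ≤ u j := by
    intro j y hy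
    have hcj := (cf_pos ha j).le
    rw [norm_mul, norm_mul, norm_pow, Real.norm_of_nonneg hcj,
      Real.norm_of_nonneg (Nat.cast_nonneg j : (0:ℝ) ≤ (j:ℝ)), Real.norm_eq_abs]
    have hyr : |y| ^ (j-1) ≤ r ^ (j-1) := pow_le_pow_left₀ (abs_nonneg y) (habs y hy).le _
    calc cf a j * ((j:ℝ) * |y| ^ (j-1)) ≤ cf a j * ((j:ℝ) * r ^ (j-1)) := by
          apply mul_le_mul_of_nonneg_left _ hcj
          exact mul_le_mul_of_nonneg_left hyr (Nat.cast_nonneg j)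
      _ = u j := by rw [hu]; ring
  have hSder : ∀ y ∈ T, HasDerivAt S (D y) y := by
    intro y hy
    exact hasDerivAt_tsum_of_isPreconnected husum isOpen_Ioo
      (convex_Ioo _ _).isPreconnected
      (fun j z _ => by simpa using (hasDerivAt_pow j z).const_mul (cf a j))
      hbound h0T hg0 hy
  have hODE : ∀ y ∈ T, (1 - y) * D y = a * S y := by
    intro y hy
    have hyabs := habs y hy
    have hyr1 : |y| < 1 := lt_trans hyabs hr1
    have hDsum : Summable fun j : ℕ => cf a j * ((j:ℝ) * y ^ (j - 1)) :=
      Summable.of_norm_bounded husum (fun j => hbound j y hy)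
    have hSsum : Summable fun j : ℕ => cf a j * y ^ j := summable_cf ha hyr1
    have hterm : ∀ j : ℕ, cf a (j+1) * (((j:ℝ)+1) * y ^ j)
        = a * (cf a j * y ^ j) + y * (cf a j * ((j:ℝ) * y ^ (j - 1))) := by
      intro j
      have hc := cf_succ_mul a j
      have h1 : cf a (j+1) * (((j:ℝ)+1) * y ^ j) = cf a j * (a + j) * y ^ j := by
        rw [← mul_assoc]
        push_cast at hc ⊢
        rw [hc]
      rw [h1]
      cases j with
      | zero => simp; ring
      | succ i =>
        push_cast
        rw [pow_succ]
        ring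
    have hshift : D y = ∑' j : ℕ, cf a (j+1) * (((j:ℝ)+1) * y ^ j) := by
      rw [hD]
      simp only
      rw [Summable.tsum_eq_zero_add hDsum]
      simp only [Nat.cast_zero, zero_mul, mul_zero, zero_add]
      apply tsum_congr
      intro j
      push_cast
      simp only [Nat.add_sub_cancel]
    have hsum2 : Summable fun j : ℕ => y * (cf a j * ((j:ℝ) * y ^ (j - 1))) :=
      hDsum.mul_left y
    have hsum1 : Summable fun j : ℕ => a * (cf a j * y ^ j) := hSsum.mul_left a
    have hDeq : D y = a * S y + y * D y := by
      conv_lhs => rw [hshift]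
      rw [tsum_congr hterm, Summable.tsum_add hsum1 hsum2, tsum_mul_left, tsum_mul_left]
    linarith [hDeq]
  -- the function g = S * (1-·)^a has zero derivative on [0, x]
  have hIccT : Set.Icc (0:ℝ) x ⊆ T := by
    intro y hy
    exact ⟨by linarith [hy.1], by linarith [hy.2]⟩
  set g : ℝ → ℝ := fun y => S y * (1 - y) ^ a with hg
  have hgder : ∀ y ∈ Set.Icc (0:ℝ) x, HasDerivAt g 0 y := by
    intro y hy
    have hyT : y ∈ T := hIccT hy
    have h1y : 0 < 1 - y := by
      have : y ≤ x := hy.2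
      linarith
    have hbase : HasDerivAt (fun z : ℝ => 1 - z) (-1) y := by
      simpa using (hasDerivAt_id y).const_sub 1
    have houter : HasDerivAt (fun w : ℝ => w ^ a) (a * (1-y) ^ (a-1)) (1 - y) :=
      Real.hasDerivAt_rpow_const (Or.inl h1y.ne')
    have hpow : HasDerivAt (fun z : ℝ => (1 - z) ^ a) (a * (1-y) ^ (a-1) * (-1)) y :=
      HasDerivAt.comp y houter hbase
    have hprod := (hSder y hyT).mul hpow
    have hsplit : (1 - y) ^ a = (1 - y) ^ (a - 1) * (1 - y) := by
      rw [← Real.rpow_add_one h1y.ne' (a - 1)]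
      norm_num
    have hzero : D y * (1 - y) ^ a + S y * (a * (1-y) ^ (a-1) * -1) = 0 := by
      rw [hsplit]
      have := hODE y hyT
      set A := (1 - y) ^ (a - 1)
      linear_combination A * this
    rw [hg]
    rw [hzero] at hprod
    exact hprod
  have hconst : g x = g 0 := by
    apply constant_of_has_deriv_right_zero
      (fun y hy => (hgder y hy).continuousAt.continuousWithinAt)
      (fun y hy => (hgder y (Set.mem_Icc.mpr ⟨hy.1, hy.2.le⟩)).hasDerivWithinAt)
    exact Set.right_mem_Icc.mpr hx0
  have hS0 : S 0 = 1 := by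
    rw [hS]
    simp only
    rw [tsum_eq_single 0]
    · simp [cf_zero]
    · intro j hj
      rw [zero_pow hj, mul_zero]
  have hg0' : g 0 = 1 := by rw [hg]; simp [hS0]
  have hgx : S x * (1 - x) ^ a = 1 := by
    have := hconst.trans hg0'
    simpa [hg] using this
  have hpos : (0:ℝ) < (1 - x) ^ a := Real.rpow_pos_of_pos (by linarith) a
  rw [Real.rpow_neg (by linarith : (0:ℝ) ≤ 1 - x)]
  rw [hS] at hgx
  simp only at hgx
  field_simp
  linarith [hgx]


noncomputable def NBw (p a : ℝ) (j : ℕ) : ℝ := p ^ a * (cf a j * (1 - p) ^ j)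

lemma NBw_nonneg {p a : ℝ} (hp0 : 0 < p) (hp1 : p < 1) (ha : 0 < a) (j : ℕ) :
    0 ≤ NBw p a j := by
  have h1 := (cf_pos ha j).le
  have h2 : (0:ℝ) ≤ 1 - p := by linarith
  have h3 : (0:ℝ) ≤ p ^ a := (Real.rpow_pos_of_pos hp0 a).le
  unfold NBw; positivity

lemma NBw_pos {p a : ℝ} (hp0 : 0 < p) (hp1 : p < 1) (ha : 0 < a) (j : ℕ) :
    0 < NBw p a j := by
  have h1 := cf_pos ha j
  have h2 : (0:ℝ) < 1 - p := by linarith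
  have h3 : (0:ℝ) < p ^ a := Real.rpow_pos_of_pos hp0 a
  unfold NBw; positivity

lemma NBw_summable {p a : ℝ} (hp0 : 0 < p) (hp1 : p < 1) (ha : 0 < a) :
    Summable (NBw p a) := by
  have hq : |1 - p| < 1 := by rw [abs_lt]; constructor <;> linarith
  exact (summable_cf ha hq).mul_left _

lemma NBw_tsum {p a : ℝ} (hp0 : 0 < p) (hp1 : p < 1) (ha : 0 < a) :
    ∑' j : ℕ, NBw p a j = 1 := by
  unfold NBw
  rw [tsum_mul_left, binom_tsum ha (by linarith) (by linarith)]
  have : 1 - (1 - p) = p := by ring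
  rw [this, ← Real.rpow_add hp0]
  simp

noncomputable def NB (p a : ℝ) : PMF ℕ :=
  if h : 0 < p ∧ p < 1 ∧ 0 < a then
    ⟨fun j => ENNReal.ofReal (NBw p a j), by
      rw [ENNReal.summable.hasSum_iff,
        ← ENNReal.ofReal_tsum_of_nonneg (NBw_nonneg h.1 h.2.1 h.2.2)
          (NBw_summable h.1 h.2.1 h.2.2), NBw_tsum h.1 h.2.1 h.2.2, ENNReal.ofReal_one]⟩
  else PMF.pure 0

lemma NB_apply {p a : ℝ} (hp0 : 0 < p) (hp1 : p < 1) (ha : 0 < a) (j : ℕ) :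
    NB p a j = ENNReal.ofReal (NBw p a j) := by
  have e := (dif_pos ⟨hp0, hp1, ha⟩ : NB p a = _)
  exact (congrArg (fun P : PMF ℕ => P j) e).trans rfl

lemma NB_conv {p a b : ℝ} (hp0 : 0 < p) (hp1 : p < 1) (ha : 0 < a) (hb : 0 < b) :
    ((NB p a).bind fun i => (NB p b).map fun j => i + j) = NB p (a + b) := by
  have hab : 0 < a + b := by linarith
  ext m
  rw [PMF.bind_apply, NB_apply hp0 hp1 hab]
  have hinner : ∀ i : ℕ, ((NB p b).map fun j => i + j) m
      = if i ≤ m then NB p b (m - i) else 0 := by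
    intro i
    rw [PMF.map_apply]
    by_cases h : i ≤ m
    · rw [if_pos h, tsum_eq_single (m - i)]
      · rw [if_pos (by omega)]
      · intro j hj
        rw [if_neg (by omega)]
    · rw [if_neg h, Summable.tsum_eq_zero_iff ENNReal.summable]
      intro j
      rw [if_neg (by omega)]
  simp_rw [hinner]
  have houter : ∑' i : ℕ, NB p a i * (if i ≤ m then NB p b (m - i) else 0)
      = ∑ i ∈ Finset.range (m + 1), NB p a i * (if i ≤ m then NB p b (m - i) else 0) := by
    apply tsum_eq_sum
    intro i hi
    have : ¬ i ≤ m := by simp at hi; omega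
    rw [if_neg this, mul_zero]
  rw [houter]
  have hterm : ∀ i ∈ Finset.range (m + 1),
      NB p a i * (if i ≤ m then NB p b (m - i) else 0)
        = ENNReal.ofReal (NBw p a i * NBw p b (m - i)) := by
    intro i hi
    have him : i ≤ m := by simp at hi; omega
    rw [if_pos him, NB_apply hp0 hp1 ha, NB_apply hp0 hp1 hb,
      ← ENNReal.ofReal_mul (NBw_nonneg hp0 hp1 ha i)]
  rw [Finset.sum_congr rfl hterm,
    ← ENNReal.ofReal_sum_of_nonneg (fun i _ =>
      mul_nonneg (NBw_nonneg hp0 hp1 ha i) (NBw_nonneg hp0 hp1 hb _))]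
  congr 1
  have hreal : ∑ i ∈ Finset.range (m + 1), NBw p a i * NBw p b (m - i)
      = NBw p (a + b) m := by
    have hrw : ∀ i ∈ Finset.range (m + 1), NBw p a i * NBw p b (m - i)
        = p ^ (a + b) * (1 - p) ^ m * (cf a i * cf b (m - i)) := by
      intro i hi
      have him : i ≤ m := by simp at hi; omega
      unfold NBw
      rw [Real.rpow_add hp0]
      have : (1 - p) ^ i * (1 - p) ^ (m - i) = (1 - p) ^ m := by
        rw [← pow_add]; congr 1; omega
      calc p ^ a * (cf a i * (1 - p) ^ i) * (p ^ b * (cf b (m-i) * (1 - p) ^ (m - i)))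
          = p ^ a * p ^ b * ((1 - p) ^ i * (1 - p) ^ (m - i)) * (cf a i * cf b (m - i)) := by
            ring
        _ = p ^ a * p ^ b * (1 - p) ^ m * (cf a i * cf b (m - i)) := by rw [this]
    rw [Finset.sum_congr rfl hrw, ← Finset.mul_sum]
    have hvan : ∑ i ∈ Finset.range (m + 1), cf a i * cf b (m - i) = cf (a + b) m := by
      rw [← cf_add a b m, Finset.Nat.sum_antidiagonal_eq_sum_range_succ_mk]
    rw [hvan]
    unfold NBw
    ring
  rw [hreal]

lemma pmf_lintegral_toMeasure {α : Type*} [MeasurableSpace α] [MeasurableSingletonClass α]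
    (μ : PMF α) (h : α → ℝ≥0∞) :
    ∫⁻ a, h a ∂(μ.toMeasure) = ∑' a, μ a * h a := by
  conv_lhs => rw [← μ.restrict_toMeasure_support]
  rw [lintegral_countable h μ.support_countable]
  have h1 : ∀ a : μ.support, h a * μ.toMeasure {(a : α)} = μ a * h a := by
    intro a
    rw [μ.toMeasure_apply_singleton _ (measurableSet_singleton _), mul_comm]
  rw [tsum_congr h1]
  refine tsum_subtype_eq_of_support_subset (f := fun a => μ a * h a) ?_
  intro a ha
  by_contra h0
  apply ha
  simp only [PMF.mem_support_iff, not_not] at h0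
  simp [h0]

lemma measurable_kernel (ν : Measure ℝ) [SFinite ν] :
    Measurable (fun a : ℝ => ν.map (fun y => a + y)) := by
  apply Measure.measurable_of_measurable_coe
  intro s hs
  simp_rw [Measure.map_apply (measurable_const_add _) hs]
  have heq : ∀ a : ℝ, (fun y => a + y) ⁻¹' s
      = Prod.mk a ⁻¹' ((fun p : ℝ × ℝ => p.1 + p.2) ⁻¹' s) := fun a => rfl
  simp_rw [heq]
  exact measurable_measure_prodMk_left ((measurable_fst.add measurable_snd) hs)

lemma mConv_eq_bind (μ ν : Measure ℝ) [SFinite μ] [SFinite ν] :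
    mConv μ ν = μ.bind (fun a => ν.map (fun y => a + y)) := by
  have hF : Measurable (fun p : ℝ × ℝ => p.1 + p.2) := measurable_fst.add measurable_snd
  rw [mConv, Measure.prod]
  rw [← Measure.bind_dirac_eq_map _ hF,
    Measure.bind_bind (Measurable.map_prodMk_left (ν := ν)).aemeasurable
      (show Measurable fun p : ℝ × ℝ => Measure.dirac (p.1 + p.2) from
        Measure.measurable_dirac.comp hF).aemeasurable]
  congr 1
  funext a
  rw [Measure.bind_dirac_eq_map _ hF, Measure.map_map hF measurable_prodMk_left]
  rfl

noncomputable def rconv (μ ν : PMF ℝ) : PMF ℝ := μ.bind fun a => ν.map (fun y => a + y)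

noncomputable def rconvPow (μ : PMF ℝ) : ℕ → PMF ℝ
  | 0 => PMF.pure 0
  | n + 1 => rconv μ (rconvPow μ n)

lemma toMeasure_rconv (μ ν : PMF ℝ) :
    (rconv μ ν).toMeasure = mConv μ.toMeasure ν.toMeasure := by
  rw [mConv_eq_bind]
  ext s hs
  rw [Measure.bind_apply hs (measurable_kernel ν.toMeasure).aemeasurable,
    pmf_lintegral_toMeasure, rconv, PMF.toMeasure_bind_apply _ _ _ hs]
  apply tsum_congr
  intro a
  congr 1
  rw [PMF.toMeasure_map_apply _ _ _ (measurable_const_add a) hs,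
    Measure.map_apply (measurable_const_add a) hs]

lemma toMeasure_rconvPow (μ : PMF ℝ) (n : ℕ) :
    mConvPow μ.toMeasure n = (rconvPow μ n).toMeasure := by
  induction n with
  | zero => rw [mConvPow, rconvPow, PMF.toMeasure_pure]
  | succ n ih => rw [mConvPow, rconvPow, ih, toMeasure_rconv]

lemma rconv_map (μ ν : PMF ℕ) (c d : ℝ) (k : ℕ) :
    rconv (μ.map fun i : ℕ => c + k * i) (ν.map fun j : ℕ => d + k * j)
      = (μ.bind fun i => ν.map fun j => i + j).map fun m : ℕ => (c + d) + k * m := by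
  rw [rconv, PMF.bind_map, PMF.map_bind]
  congr 1
  funext i
  simp only [Function.comp]
  rw [PMF.map_comp, PMF.map_comp]
  congr 1
  funext j
  simp only [Function.comp_apply]
  push_cast
  ring

lemma rconvPow_NB {p a c : ℝ} (hp0 : 0 < p) (hp1 : p < 1) (ha : 0 < a) (k : ℕ)
    (n : ℕ) (hn : 1 ≤ n) :
    rconvPow ((NB p a).map fun i : ℕ => c + k * i) n
      = (NB p (n * a)).map fun i : ℕ => n * c + k * i := by
  induction n, hn using Nat.le_induction with
  | base =>
    rw [rconvPow, rconvPow, rconv]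
    have h1 : ∀ x : ℝ, (PMF.pure (0:ℝ)).map (fun y => x + y) = PMF.pure x := by
      intro x
      rw [PMF.pure_map, add_zero]
    simp_rw [h1]
    rw [PMF.bind_pure]
    norm_num
  | succ n hn ih =>
    have hna : (0:ℝ) < n * a := by
      have h1 : (1:ℝ) ≤ n := by exact_mod_cast hn
      nlinarith
    rw [rconvPow, ih, rconv_map, NB_conv hp0 hp1 ha hna]
    have h2 : a + (n:ℝ) * a = ((n+1 : ℕ) : ℝ) * a := by push_cast; ring
    have h3 : (fun m : ℕ => (c + (n:ℝ) * c) + k * m)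
        = (fun m : ℕ => ((n+1:ℕ):ℝ) * c + k * m) := by
      funext m; push_cast; ring
    rw [h2, h3]

lemma toMeasure_map_pmf {α β : Type*} [MeasurableSpace α] [MeasurableSpace β]
    (μ : PMF α) (f : α → β) (hf : Measurable f) :
    μ.toMeasure.map f = (μ.map f).toMeasure := by
  ext s hs
  rw [Measure.map_apply hf hs, PMF.toMeasure_map_apply f μ s hf hs]


/-- **Example 2.** For `k > 1`, `t > 0` and `0 < p < 1`, `q = 1 - p`, the function
`s ↦ s·(p/(1 - q s^k))^t` is the PGF of a non-negative integer-valued random variable `X`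
which is infinitely divisible (as a distribution on ℝ; the components need not be
integer-valued), with `P(X = 0) = 0`, `P(X = 1) > 0`, and support `{1, 1+k, 1+2k, ...}`,
which has gaps.  Hence `P(X = 1) > 0` alone does not prevent gaps in the support of a
non-negative integer-valued infinitely divisible law. -/
theorem shifted_negBinomial_infdiv_mass_at_one_with_gaps
    (k : ℕ) (hk : 1 < k) (t p : ℝ) (ht : 0 < t) (hp0 : 0 < p) (hp1 : p < 1) :
    ∃ X : PMF ℕ,
      (∀ s : ℝ, s ∈ Set.Icc (0 : ℝ) 1 →
        pgf X s = s * (p / (1 - (1 - p) * s ^ k)) ^ t) ∧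
      (∀ n : ℕ, 1 ≤ n → ∃ ν : Measure ℝ, IsProbabilityMeasure ν ∧
        mConvPow ν n = (X.toMeasure).map (fun j : ℕ => (j : ℝ))) ∧
      X 0 = 0 ∧ 0 < X 1 ∧
      (∀ m : ℕ, X m ≠ 0 ↔ ∃ j : ℕ, m = 1 + k * j) := by
  have hk0 : 0 < k := by omega
  set g : ℕ → ℕ := fun j => 1 + k * j with hgdef
  have hginj : Function.Injective g := by
    intro i j h
    simp only [hgdef] at h
    have : k * i = k * j := by omega
    exact Nat.eq_of_mul_eq_mul_left hk0 this
  set X : PMF ℕ := (NB p t).map g with hX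
  have hXval : ∀ j : ℕ, X (g j) = ENNReal.ofReal (NBw p t j) := by
    intro j
    rw [hX, PMF.map_apply, tsum_eq_single j, if_pos rfl, NB_apply hp0 hp1 ht]
    intro i hij
    exact if_neg (fun hc => hij (hginj hc.symm))
  have hXzero : ∀ m : ℕ, (¬ ∃ j, m = g j) → X m = 0 := by
    intro m hm
    rw [hX, PMF.map_apply]
    rw [Summable.tsum_eq_zero_iff ENNReal.summable]
    intro i
    rw [if_neg (fun hc => hm ⟨i, hc⟩)]
  refine ⟨X, ?_, ?_, ?_, ?_, ?_⟩
  · -- PGF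
    intro s hs
    obtain ⟨hs0, hs1⟩ := hs
    have hq0 : (0:ℝ) < 1 - p := by linarith
    set x : ℝ := (1 - p) * s ^ k with hxdef
    have hx0 : (0:ℝ) ≤ x := by positivity
    have hsk : s ^ k ≤ 1 := pow_le_one₀ hs0 hs1
    have hx1 : x < 1 := by nlinarith [mul_le_mul_of_nonneg_left hsk hq0.le]
    have h1x : (0:ℝ) < 1 - x := by linarith
    rw [pgf]
    have hsupp : Function.support (fun m => (X m).toReal * s ^ m) ⊆ Set.range g := by
      intro m hm
      by_contra hr
      apply hm
      show (X m).toReal * s ^ m = 0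
      rw [hXzero m (fun ⟨j, hj⟩ => hr ⟨j, hj.symm⟩), ENNReal.toReal_zero, zero_mul]
    rw [← hginj.tsum_eq hsupp]
    have hterm : ∀ j : ℕ, (X (g j)).toReal * s ^ (g j)
        = s * (p ^ t * (cf t j * x ^ j)) := by
      intro j
      rw [hXval j, ENNReal.toReal_ofReal (NBw_nonneg hp0 hp1 ht j)]
      show NBw p t j * s ^ (1 + k * j) = _
      rw [pow_add, pow_one, pow_mul]
      unfold NBw
      rw [hxdef, mul_pow]
      ring
    rw [tsum_congr hterm, tsum_mul_left, tsum_mul_left, binom_tsum ht hx0 hx1,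
      Real.div_rpow hp0.le h1x.le, Real.rpow_neg h1x.le, div_eq_mul_inv]
  · -- infinite divisibility
    intro n hn
    have hnR : (0:ℝ) < n := by exact_mod_cast Nat.lt_of_lt_of_le Nat.zero_lt_one hn
    have htn : 0 < t / n := by positivity
    refine ⟨((NB p (t / n)).map fun j : ℕ => 1 / (n:ℝ) + k * j).toMeasure,
      PMF.toMeasure.isProbabilityMeasure _, ?_⟩
    rw [toMeasure_rconvPow, rconvPow_NB hp0 hp1 htn k n hn]
    have e1 : (n:ℝ) * (t / n) = t := by field_simp
    have e2 : (fun i : ℕ => (n:ℝ) * (1 / (n:ℝ)) + k * i)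
        = fun i : ℕ => 1 + k * (i:ℝ) := by
      funext i; field_simp
    rw [e1, e2, toMeasure_map_pmf X (fun j : ℕ => (j : ℝ)) measurable_from_top]
    congr 1
    rw [hX, PMF.map_comp]
    congr 1
    funext i
    simp only [Function.comp_apply, hgdef]
    push_cast
    ring
  · -- X 0 = 0
    apply hXzero
    rintro ⟨j, hj⟩
    simp only [hgdef] at hj
    omega
  · -- 0 < X 1
    have h1 : g 0 = 1 := by simp [hgdef]
    rw [← h1, hXval 0]
    exact ENNReal.ofReal_pos.mpr (NBw_pos hp0 hp1 ht 0)
  · intro m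
    constructor
    · intro hm
      by_contra hc
      exact hm (hXzero m hc)
    · rintro ⟨j, rfl⟩
      rw [show 1 + k * j = g j from rfl, hXval j]
      exact (ENNReal.ofReal_pos.mpr (NBw_pos hp0 hp1 ht j)).ne'
end
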